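/- Suppose the transition graph G is a single cycle C through all N ≥ 3 vertices, and let {m,n} be an edge of C. The spanning trees of G are exactly the paths obtained by deleting one edge of C; let S be the spanning tree obtained by deleting {m,n}, and let T be any spanning tree containing {m,n}. Then w(T_m) w(S_n) = exp(F_C) · w(T_n) w(S_m), where F_C is the cycle force of C in the orientation that traverses the edge {m,n} from n to m. -/

import Mathlib

open Finset

attribute [local instance] Classical.propDecidable

/-- The transition graph of a rate matrix: an edge between `i ≠ j` whenever
both rates are positive. -/
def transGraph {V : Type*} (W : V → V → ℝ) : SimpleGraph V where
  Adj i j := i ≠ j ∧ 0 < W i j ∧ 0 < W j i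
  symm := ⟨fun i j ⟨h, h1, h2⟩ => ⟨h.symm, h2, h1⟩⟩
  loopless := ⟨fun i ⟨h, _, _⟩ => h rfl⟩

/-- `T` is a spanning tree of `G`. -/
def IsSpanningTree {V : Type*} (G T : SimpleGraph V) : Prop := T ≤ G ∧ T.IsTree

/-- Weight of spanning tree `T` rooted at `r`: product over the edges of `T`,
each directed towards `r`, of the corresponding rate (`W i j` is the rate of
the jump `j → i`). -/
noncomputable def treeWeight {V : Type*} [Fintype V] (W : V → V → ℝ)
    (T : SimpleGraph V) (r : V) : ℝ :=
  ∏ p ∈ Finset.univ.filter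
      (fun p : V × V => T.Adj p.1 p.2 ∧ T.dist p.2 r + 1 = T.dist p.1 r),
    W p.2 p.1

/-- Sum of rooted-tree weights over all spanning trees of `G`, rooted at `k`. -/
noncomputable def sumTrees {V : Type*} [Fintype V] [DecidableEq V] (W : V → V → ℝ)
    (G : SimpleGraph V) (k : V) : ℝ :=
  ∑ T ∈ Finset.univ.filter (fun T : SimpleGraph V => IsSpanningTree G T),
    treeWeight W T k

/-- Steady state via matrix-tree formula. -/
noncomputable def mttPi {V : Type*} [Fintype V] [DecidableEq V] (W : V → V → ℝ)
    (G : SimpleGraph V) (k : V) : ℝ :=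
  sumTrees W G k / ∑ l : V, sumTrees W G l

/-- Weight of a walk: product of the rates of its directed edges
(a step `a → b` has rate `W b a`). -/
noncomputable def walkWeight {V : Type*} (W : V → V → ℝ) {G : SimpleGraph V} {u v : V}
    (p : G.Walk u v) : ℝ :=
  (p.darts.map (fun d => W d.snd d.fst)).prod

/-- Cycle force of a closed walk. -/
noncomputable def cycleForce {V : Type*} (W : V → V → ℝ) {G : SimpleGraph V} {u : V}
    (p : G.Walk u u) : ℝ :=
  Real.log (walkWeight W p / walkWeight W p.reverse)

/-- `Fmax`: the maximum of `|F_C|` over cycles `C` of `G` containing the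
edge `{m,n}`; `0` if there is none. -/
noncomputable def Fmax {V : Type*} (W : V → V → ℝ) (G : SimpleGraph V) (m n : V) : ℝ :=
  sSup {x : ℝ | ∃ (u : V) (p : G.Walk u u), p.IsCycle ∧ s(m, n) ∈ p.edges ∧
    x = |cycleForce W p|}

/-- `F_{i↔j}`: the maximum entropy produced going from `i` to `j` and back
along non-self-intersecting paths. -/
noncomputable def Fbtw {V : Type*} (W : V → V → ℝ) (G : SimpleGraph V) (i j : V) : ℝ :=
  sSup {x : ℝ | ∃ (p : G.Walk i j) (q : G.Walk j i), p.IsPath ∧ q.IsPath ∧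
    x = |Real.log (walkWeight W p * walkWeight W q /
          (walkWeight W p.reverse * walkWeight W q.reverse))|}

/-- The parameterized rates `W_ij = exp(-(B_ij - E_j - F_ij/2))` on the edges of `G`. -/
noncomputable def rates {V : Type*} (G : SimpleGraph V) (Bp : V → V → ℝ) (Ep : V → ℝ)
    (Fp : V → V → ℝ) : V → V → ℝ :=
  fun i j => if G.Adj i j then Real.exp (-(Bp i j - Ep j - Fp i j / 2)) else 0

/-- Steady state as a function of the parameters. -/
noncomputable def piP {V : Type*} [Fintype V] [DecidableEq V] (G : SimpleGraph V)
    (Bp : V → V → ℝ) (Ep : V → ℝ) (Fp : V → V → ℝ) (k : V) : ℝ :=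
  mttPi (rates G Bp Ep Fp) G k

/-- Replace the symmetric edge parameter of the edge `{m,n}` by `t`. -/
noncomputable def updB {V : Type*} (Bp : V → V → ℝ) (m n : V) (t : ℝ) : V → V → ℝ :=
  fun i j => if (i = m ∧ j = n) ∨ (i = n ∧ j = m) then t else Bp i j

/-- Add `t` to the symmetric edge parameters of all edges in `S`. -/
noncomputable def updBadd {V : Type*} (Bp : V → V → ℝ) (S : Set (Sym2 V)) (t : ℝ) : V → V → ℝ :=
  fun i j => if s(i, j) ∈ S then Bp i j + t else Bp i j

/-- Replace the antisymmetric edge parameter of the edge `{i,j}` by `t`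
(and by `-t` in the reverse direction). -/
noncomputable def updF {V : Type*} (Fp : V → V → ℝ) (i j : V) (t : ℝ) : V → V → ℝ :=
  fun a b => if a = i ∧ b = j then t else if a = j ∧ b = i then -t else Fp a b

/-- The full rate matrix, with diagonal entries fixed by conservation of probability. -/
noncomputable def fullW {V : Type*} [Fintype V] [DecidableEq V] (W : V → V → ℝ) :
    V → V → ℝ :=
  fun i j => if i = j then -∑ l ∈ Finset.univ.filter (fun l => l ≠ j), W l j else W i j

/-!
Rerooting a tree across one of its edges `{a, b}` reverses only that edge, so
`w(T_a) W_ba = w(T_b) W_ab`; chaining this along a walk `q` from `m` to `n` inside `S` gives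
`w(S_m) w(q) = w(S_n) w(q⁻¹)`. Since `G` is a cycle through all `N` vertices it has exactly `N`
edges, while `S` has `N - 1`; so `S` is `G` minus `{m, n}`, and `q` can be taken to be the rest of
the cycle, `C = (n → m) q`, whose force is `exp F_C = W_mn w(q) / (W_nm w(q⁻¹))`. Multiplying the
two rerooting identities (for `T` across `{m, n}`, for `S` along `q`) gives the claim.
-/

namespace SimpleGraph

variable {V : Type*} {G : SimpleGraph V}

noncomputable def edgesToward [Fintype V] (T : SimpleGraph V) (r : V) : Finset (V × V) :=
  univ.filter fun p => T.Adj p.1 p.2 ∧ T.dist p.2 r + 1 = T.dist p.1 r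

lemma mem_erase_edgesToward [Fintype V] {T : SimpleGraph V} {m n i j : V} (h : T.Adj m n) :
    (i, j) ∈ (T.edgesToward m).erase (n, m) ↔
      T.Adj i j ∧ s(i, j) ≠ s(m, n) ∧ T.dist j m + 1 = T.dist i m := by
  simp only [edgesToward, mem_erase, mem_filter, mem_univ, true_and, ne_eq, Sym2.eq_iff,
    Prod.mk.injEq, not_or]
  constructor
  · rintro ⟨hnm, hij, hd⟩
    refine ⟨hij, ⟨?_, hnm⟩, hd⟩
    rintro ⟨rfl, rfl⟩
    simp at hd
  · rintro ⟨hij, ⟨-, hnm⟩, hd⟩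
    exact ⟨hnm, hij, hd⟩

namespace IsTree

/-- If `i → j` points towards `a` but not towards `b`, the shortest `i`–`a` walks through `j`
and through `b` are both paths, hence equal; then `j` lies on the shortest `i`–`b` path,
which is too short for `dist j b = dist i b + 1`. -/
lemma dist_add_one_of_dist_add_one (hG : G.IsTree) {a b i j : V} (hab : G.Adj a b)
    (hij : G.Adj i j) (hne : s(i, j) ≠ s(a, b)) (h : G.dist j a + 1 = G.dist i a) :
    G.dist j b + 1 = G.dist i b := by
  by_contra hb
  have hjb : G.dist j b = G.dist i b + 1 := by
    have := hG.dist_eq_dist_add_one_of_adj b hij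
    rw [dist_comm (u := b), dist_comm (u := b)] at this
    omega
  have hia : G.dist i a = G.dist i b + 1 := by
    have := hG.dist_eq_dist_add_one_of_adj i hab
    have := hG.dist_eq_dist_add_one_of_adj j hab
    rw [dist_comm (u := i), dist_comm (u := i), dist_comm (u := j), dist_comm (u := j)] at *
    omega
  obtain ⟨p, -, hp⟩ := hG.connected.exists_path_of_dist j a
  obtain ⟨q, -, hq⟩ := hG.connected.exists_path_of_dist i b
  have hpath₁ : (Walk.cons hij p).IsPath := Walk.isPath_of_length_eq_dist _ (by simp [hp, h])
  have hpath₂ : (q.concat hab.symm).IsPath :=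
    Walk.isPath_of_length_eq_dist _ (by simp [hq, hia])
  have heq : Walk.cons hij p = q.concat hab.symm :=
    congrArg Subtype.val ((hG.isAcyclic.subsingleton_path i a).elim ⟨_, hpath₁⟩ ⟨_, hpath₂⟩)
  have hijq : s(i, j) ∈ q.edges := by
    have : s(i, j) ∈ (q.concat hab.symm).edges := heq ▸ by simp
    rw [Walk.edges_concat, List.concat_eq_append, List.mem_append, List.mem_singleton,
      Sym2.eq_swap (a := b)] at this
    exact this.resolve_right hne
  have hj : j ∈ q.support := q.snd_mem_support_of_mem_edges hijq
  have := dist_le (q.dropUntil j hj)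
  have := q.length_dropUntil_le_length hj
  omega

lemma dist_add_one_iff (hG : G.IsTree) {a b i j : V} (hab : G.Adj a b) (hij : G.Adj i j)
    (hne : s(i, j) ≠ s(a, b)) :
    G.dist j a + 1 = G.dist i a ↔ G.dist j b + 1 = G.dist i b :=
  ⟨hG.dist_add_one_of_dist_add_one hab hij hne,
    hG.dist_add_one_of_dist_add_one hab.symm hij (by rwa [Sym2.eq_swap (a := b)])⟩

lemma erase_edgesToward [Fintype V] (hG : G.IsTree) {m n : V} (h : G.Adj m n) :
    (G.edgesToward m).erase (n, m) = (G.edgesToward n).erase (m, n) := by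
  ext ⟨i, j⟩
  rw [mem_erase_edgesToward h, mem_erase_edgesToward h.symm, Sym2.eq_swap (a := n)]
  exact and_congr_right fun hij => and_congr_right fun hne => hG.dist_add_one_iff h hij hne

end IsTree

namespace Walk

lemma IsPath.fst_ne_of_mem_darts {u v : V} {p : G.Walk u v} (hp : p.IsPath) {d : G.Dart}
    (hd : d ∈ p.darts) : d.fst ≠ v := by
  have hmem : d.fst ∈ p.reverse.support.tail := by
    rw [← map_snd_darts, darts_reverse]
    exact List.mem_map.2 ⟨d.symm, by simpa using hd, rfl⟩
  have hnodup := hp.reverse.support_nodup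
  rw [← cons_tail_support, List.nodup_cons] at hnodup
  rintro rfl
  exact hnodup.1 hmem

lemma IsCycle.exists_cons_of_mem_darts {u n m : V} {c : G.Walk u u} (hc : c.IsCycle)
    (h : G.Adj n m) (hd : ⟨(n, m), h⟩ ∈ c.darts) :
    ∃ q : G.Walk m n, (cons h q).IsCycle ∧ (cons h q).darts.Perm c.darts := by
  have hn := c.dart_fst_mem_support_of_mem_darts hd
  have hrot := hc.rotate hn
  have hperm := (c.rotate_darts n hn).perm
  obtain ⟨x, h', q, hq⟩ := not_nil_iff.mp hrot.not_nil
  rw [hq] at hrot hperm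
  have hx : x = m := by
    rcases List.mem_cons.mp (hperm.mem_iff.mpr hd) with hd | hdq
    · exact (congrArg (·.snd) hd).symm
    · exact absurd rfl (((cons_isCycle_iff q h').mp hrot).1.fst_ne_of_mem_darts hdq)
  subst hx
  exact ⟨q, hrot, hperm⟩

lemma IsCycle.isHamiltonianCycle {u : V} {c : G.Walk u u} (hc : c.IsCycle)
    (hall : ∀ x, x ∈ c.support) : c.IsHamiltonianCycle := by
  refine ⟨hc, hc.isPath_tail.isHamiltonian_of_mem fun x => ?_⟩
  rw [support_tail_of_not_nil _ hc.not_nil]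
  rcases List.mem_cons.mp (c.cons_tail_support ▸ hall x) with rfl | hx
  · exact end_mem_tail_support hc.not_nil
  · exact hx

lemma IsHamiltonianCycle.card_edgeFinset [Fintype V] [Fintype G.edgeSet] {u : V}
    {c : G.Walk u u} (hc : c.IsHamiltonianCycle) (hedges : ∀ e, e ∈ G.edgeSet ↔ e ∈ c.edges) :
    G.edgeFinset.card = Fintype.card V := by
  have : G.edgeFinset = c.edges.toFinset := by
    ext e
    rw [mem_edgeFinset, List.mem_toFinset, hedges]
  rw [this, List.toFinset_card_of_nodup hc.isCycle.edges_nodup, length_edges, hc.length_eq]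

end Walk

lemma IsTree.edgeSet_eq_diff_singleton [Fintype V] [Fintype G.edgeSet] {S : SimpleGraph V}
    [Fintype S.edgeSet] (hS : S.IsTree) (hSG : S ≤ G)
    (hcard : G.edgeFinset.card ≤ Fintype.card V) {e : Sym2 V} (he : e ∈ G.edgeSet)
    (heS : e ∉ S.edgeSet) : S.edgeSet = G.edgeSet \ {e} := by
  have hsub : S.edgeFinset ⊆ G.edgeFinset.erase e := fun f hf => by
    rw [mem_edgeFinset] at hf
    exact mem_erase.2 ⟨ne_of_mem_of_not_mem hf heS, mem_edgeFinset.2 (edgeSet_mono hSG hf)⟩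
  have heq := eq_of_subset_of_card_le hsub (by
    rw [card_erase_of_mem (mem_edgeFinset.2 he)]
    have := hS.card_edgeFinset
    omega)
  rw [← coe_edgeFinset S, heq, coe_erase, coe_edgeFinset]

end SimpleGraph

section Weights

open SimpleGraph

variable {V : Type*} (W : V → V → ℝ)

lemma treeWeight_eq_prod_edgesToward [Fintype V] (T : SimpleGraph V) (r : V) :
    treeWeight W T r = ∏ p ∈ T.edgesToward r, W p.2 p.1 :=
  rfl

/-- Moving the root of `T` across an edge `{m, n}` of `T` only reverses that edge. -/
lemma SimpleGraph.IsTree.treeWeight_mul_rate [Fintype V] {T : SimpleGraph V} (hT : T.IsTree)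
    {m n : V} (h : T.Adj m n) : treeWeight W T m * W n m = treeWeight W T n * W m n := by
  have hm : (n, m) ∈ T.edgesToward m := by
    simp [edgesToward, h.symm, dist_eq_one_iff_adj.2 h.symm]
  have hn : (m, n) ∈ T.edgesToward n := by
    simp [edgesToward, h, dist_eq_one_iff_adj.2 h]
  rw [treeWeight_eq_prod_edgesToward, ← mul_prod_erase _ _ hm, treeWeight_eq_prod_edgesToward,
    ← mul_prod_erase _ _ hn, hT.erase_edgesToward h]
  ring

variable {G : SimpleGraph V}

lemma walkWeight_cons {u v w : V} (h : G.Adj u v) (p : G.Walk v w) :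
    walkWeight W (Walk.cons h p) = W v u * walkWeight W p := by
  simp [walkWeight]

lemma walkWeight_reverse {u v : V} (p : G.Walk u v) :
    walkWeight W p.reverse = (p.darts.map fun d => W d.fst d.snd).prod := by
  rw [walkWeight, Walk.darts_reverse, List.map_reverse, List.prod_reverse, List.map_map]
  rfl

lemma walkWeight_reverse_cons {u v w : V} (h : G.Adj u v) (p : G.Walk v w) :
    walkWeight W (Walk.cons h p).reverse = W u v * walkWeight W p.reverse := by
  rw [walkWeight_reverse, walkWeight_reverse, Walk.darts_cons, List.map_cons, List.prod_cons]

lemma walkWeight_pos {u v : V} (p : (transGraph W).Walk u v) : 0 < walkWeight W p :=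
  List.prod_pos fun _ hr => by
    obtain ⟨d, -, rfl⟩ := List.mem_map.mp hr
    exact d.adj.2.2

lemma SimpleGraph.IsTree.treeWeight_mul_walkWeight [Fintype V] {S : SimpleGraph V}
    (hS : S.IsTree) {a b : V} (p : G.Walk a b) (hp : ∀ e ∈ p.edges, e ∈ S.edgeSet) :
    treeWeight W S a * walkWeight W p = treeWeight W S b * walkWeight W p.reverse := by
  induction p with
  | nil => simp [walkWeight]
  | @cons a c b h q ih =>
    have hac : S.Adj a c := hp s(a, c) (by simp)
    have ih := ih fun e he => hp e (by simp [he])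
    rw [walkWeight_cons, walkWeight_reverse_cons]
    linear_combination walkWeight W q * hS.treeWeight_mul_rate W hac + W a c * ih

lemma cycleForce_eq_of_perm_darts {u v : V} {c : G.Walk u u} {c' : G.Walk v v}
    (h : c.darts.Perm c'.darts) : cycleForce W c = cycleForce W c' := by
  rw [cycleForce, cycleForce, walkWeight_reverse, walkWeight_reverse, walkWeight, walkWeight,
    (h.map _).prod_eq, (h.map _).prod_eq]

lemma exp_cycleForce {u : V} (c : (transGraph W).Walk u u) :
    Real.exp (cycleForce W c) = walkWeight W c / walkWeight W c.reverse :=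
  Real.exp_log (div_pos (walkWeight_pos W c) (walkWeight_pos W c.reverse))

end Weights

theorem stmt17_general {V : Type*} [Fintype V] (W : V → V → ℝ)
    (u : V) (c : (transGraph W).Walk u u) (hc : c.IsCycle)
    (hall : ∀ x : V, x ∈ c.support)
    (hedges : ∀ e, e ∈ (transGraph W).edgeSet ↔ e ∈ c.edges)
    (m n : V)
    (hd : ∃ d ∈ c.darts, d.toProd = (n, m))
    (S : SimpleGraph V) (hS : IsSpanningTree (transGraph W) S) (hSmn : ¬S.Adj m n)
    (T : SimpleGraph V) (hT : IsSpanningTree (transGraph W) T) (hTmn : T.Adj m n) :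
    treeWeight W T m * treeWeight W S n
      = Real.exp (cycleForce W c) * (treeWeight W T n * treeWeight W S m) := by
  obtain ⟨⟨⟨n', m'⟩, hnm⟩, hd, hdnm⟩ := hd
  obtain ⟨hn, hm⟩ := Prod.mk.inj hdnm
  subst n' m'
  obtain ⟨q, hcyc, hperm⟩ := hc.exists_cons_of_mem_darts hnm hd
  have hSedges := hS.2.edgeSet_eq_diff_singleton hS.1
    ((hc.isHamiltonianCycle hall).card_edgeFinset hedges).le (e := s(m, n)) hnm.symm hSmn
  have hqS : ∀ e ∈ q.edges, e ∈ S.edgeSet := fun e he => by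
    rw [hSedges]
    refine ⟨q.edges_subset_edgeSet he, ?_⟩
    rintro rfl
    exact ((SimpleGraph.Walk.cons_isCycle_iff q hnm).mp hcyc).2 (by rwa [Sym2.eq_swap])
  have hforce : Real.exp (cycleForce W c)
      = W m n * walkWeight W q / (W n m * walkWeight W q.reverse) := by
    rw [← cycleForce_eq_of_perm_darts W hperm, exp_cycleForce, walkWeight_cons,
      walkWeight_reverse_cons]
  have hWnm : 0 < W n m := hnm.2.1
  rw [hforce, div_mul_eq_mul_div, eq_div_iff (mul_pos hWnm (walkWeight_pos W _)).ne']
  linear_combination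
    (treeWeight W S n * walkWeight W q.reverse) * hT.2.treeWeight_mul_rate W hTmn
      - (treeWeight W T n * W m n) * hS.2.treeWeight_mul_walkWeight W q hqS

/-- for a single-cycle graph through all `N ≥ 3` vertices, a
spanning tree `T` containing the edge `{m,n}` and the spanning tree `S`
obtained by deleting `{m,n}`, one has
`w(T_m)w(S_n) = exp(F_C)·w(T_n)w(S_m)`, where the cycle is oriented so as to
traverse `{m,n}` from `n` to `m`. -/
theorem stmt17 {V : Type*} [Fintype V] [DecidableEq V] (W : V → V → ℝ)
    (hoff : ∀ i j, i ≠ j → 0 ≤ W i j)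
    (hsym : ∀ i j, i ≠ j → (0 < W i j ↔ 0 < W j i))
    (hN : 3 ≤ Fintype.card V)
    (u : V) (c : (transGraph W).Walk u u) (hc : c.IsCycle)
    (hall : ∀ x : V, x ∈ c.support)
    (hedges : ∀ e, e ∈ (transGraph W).edgeSet ↔ e ∈ c.edges)
    (m n : V) (hmn : (transGraph W).Adj m n)
    (hd : ∃ d ∈ c.darts, d.toProd = (n, m))
    (S : SimpleGraph V) (hS : IsSpanningTree (transGraph W) S) (hSmn : ¬S.Adj m n)
    (T : SimpleGraph V) (hT : IsSpanningTree (transGraph W) T) (hTmn : T.Adj m n) :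
    treeWeight W T m * treeWeight W S n
      = Real.exp (cycleForce W c) * (treeWeight W T n * treeWeight W S m) :=
  stmt17_general W u c hc hall hedges m n hd S hS hSmn T hT hTmn
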